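/- arXiv:2305.17257 — 2 statements merged into one kernel-verified Lean document; each statement's English description precedes it below -/
import Mathlib

section
/- Let n ≥ 1 be an integer, U ⊆ ℝ⁷ an open set containing the origin, and β a 3-form on U that is n times continuously differentiable on U and closed on U. Define the 3-form P_n β : ℝ⁷ → Λ³ by P_n β(x) = ∑_{i=0}^{n} (1/i!) (D^i β(0))(x,…,x) (with i copies of x), where D^i β is the i-th iterated Fréchet derivative of β; equivalently, each component of P_n β is the n-th Taylor polynomial at the origin of the corresponding component of β. Then P_n β is closed on all of ℝ⁷. -/
open scoped BigOperators
open Metric Set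

set_option synthInstance.maxHeartbeats 1000000
set_option maxHeartbeats 1000000

noncomputable section

/-- Euclidean space ℝ⁷. -/
abbrev E7 : Type := EuclideanSpace ℝ (Fin 7)

/-- Continuous trilinear maps (ℝ⁷)³ → ℝ with the operator norm. -/
abbrev Tri3 : Type := ContinuousMultilinearMap ℝ (fun _ : Fin 3 => E7) ℝ

/-- The subspace of alternating trilinear maps. -/
def altSubmodule : Submodule ℝ Tri3 where
  carrier := {f | ∀ v : Fin 3 → E7, ∀ i j : Fin 3, v i = v j → i ≠ j → f v = 0}
  add_mem' := by
    intro f g hf hg v i j hv hij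
    simp [hf v i j hv hij, hg v i j hv hij]
  zero_mem' := by intro v i j hv hij; simp
  smul_mem' := by
    intro c f hf v i j hv hij
    simp [hf v i j hv hij]

/-- Λ³: the normed space of alternating trilinear maps (ℝ⁷)³ → ℝ. -/
abbrev Lam3 : Type := altSubmodule

instance : NormedAddCommGroup Lam3 := inferInstance
instance : NormedSpace ℝ Lam3 := inferInstance

/-- The standard orthonormal basis vectors e₁,…,e₇ of ℝ⁷. -/
def e7 (i : Fin 7) : E7 := EuclideanSpace.single i 1

/-- A 3-form `β` is closed on `U`: it is differentiable on the interior of `U` and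
the coordinate expression of `dβ = 0` holds there. -/
def Closed3FormOn (β : E7 → Lam3) (U : Set E7) : Prop :=
  DifferentiableOn ℝ β (interior U) ∧
  ∀ x ∈ interior U, ∀ i j k l : Fin 7,
    (fderiv ℝ β x (e7 i)).1 ![e7 j, e7 k, e7 l]
      - (fderiv ℝ β x (e7 j)).1 ![e7 i, e7 k, e7 l]
      + (fderiv ℝ β x (e7 k)).1 ![e7 i, e7 j, e7 l]
      - (fderiv ℝ β x (e7 l)).1 ![e7 i, e7 j, e7 k] = 0

/-- `f` is of class `C^{l,a}` on `N`: it is `l` times continuously differentiable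
within `N`, and its `l`-th derivative is `a`-Hölder on `N`. -/
def HolderOn (l : ℕ) (a : ℝ) (f : E7 → Lam3) (N : Set E7) : Prop :=
  ContDiffOn ℝ l f N ∧
  ∃ C : ℝ, ∀ x ∈ N, ∀ y ∈ N,
    ‖iteratedFDerivWithin ℝ l f N x - iteratedFDerivWithin ℝ l f N y‖ ≤ C * ‖x - y‖ ^ a

/-- The `C^{l,a}` Hölder norm of `f` on `N`. -/
noncomputable def holderNorm (l : ℕ) (a : ℝ) (f : E7 → Lam3) (N : Set E7) : ℝ :=
  (∑ i ∈ Finset.range (l + 1), ⨆ x : N, ‖iteratedFDerivWithin ℝ i f N (x : E7)‖)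
    + ⨆ q : {q : N × N // (q.1 : E7) ≠ (q.2 : E7)},
        ‖iteratedFDerivWithin ℝ l f N (q.1.1 : E7) - iteratedFDerivWithin ℝ l f N (q.1.2 : E7)‖
          / ‖(q.1.1 : E7) - (q.1.2 : E7)‖ ^ a

/-- The Hodge Laplacian of the Euclidean metric on 3-forms, with derivatives taken
within the set `N`: `(Δβ)_{ijk} = -∑ₘ ∂ₘ² β_{ijk}`. -/
def lapW (N : Set E7) (β : E7 → Lam3) (x : E7) : Lam3 :=
  -∑ m : Fin 7, fderivWithin ℝ (fun y => fderivWithin ℝ β N y (e7 m)) N x (e7 m)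

/-- `f` has vanishing `l`-jet at the origin (derivatives within `N`). -/
def VanishingJet (l : ℕ) (f : E7 → Lam3) (N : Set E7) : Prop :=
  ∀ i ≤ l, iteratedFDerivWithin ℝ i f N 0 = 0

/-- The space of closed 3-forms of class `C^{l,a}` on `N` with vanishing `l`-jet
at the origin. -/
def GoodForm (l : ℕ) (a : ℝ) (N : Set E7) (φ : E7 → Lam3) : Prop :=
  Closed3FormOn φ N ∧ HolderOn l a φ N ∧ VanishingJet l φ N

/-- A second-order linear differential operator on 3-forms with coefficients
`A`, `B`, `C`, the derivatives being taken within `N`. -/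
def Kop (A : Fin 7 → Fin 7 → E7 → (Lam3 →L[ℝ] Lam3)) (B : Fin 7 → E7 → (Lam3 →L[ℝ] Lam3))
    (C : E7 → (Lam3 →L[ℝ] Lam3)) (N : Set E7) (β : E7 → Lam3) (x : E7) : Lam3 :=
  (∑ m : Fin 7, ∑ n : Fin 7,
      A m n x (fderivWithin ℝ (fun y => fderivWithin ℝ β N y (e7 n)) N x (e7 m)))
    + (∑ m : Fin 7, B m x (fderivWithin ℝ β N x (e7 m)))
    + C x (β x)

/-!
Write `P` for the Taylor polynomial. By the symmetry of iterated derivatives,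
`DP(x) = ∑_{i<n} (1/i!) D^{i+1}β(0)(x,…,x,·)`, and `D^{i+1}β(0)(x,…,x,·) = Dⁱ(Dβ)(0)(x,…,x)`.
Each component of `dβ` is a continuous linear functional `Ψ` of `Dβ` and `Ψ ∘ Dβ` vanishes near
`0`, so `Ψ` also kills every `Dⁱ(Dβ)(0)`, hence `DP(x)`.
-/

open Finset Filter Topology

namespace Fin

variable {α : Type*}

theorem update_const_last_eq_snoc (k : ℕ) (x v : α) :
    Function.update (fun _ : Fin (k + 1) => x) (last k) v = snoc (fun _ : Fin k => x) v := by
  funext i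
  cases i using lastCases <;> simp [(castSucc_lt_last _).ne]

theorem update_const_succ (k : ℕ) (x v : α) (j : Fin (k + 1)) :
    Function.update (fun _ : Fin (k + 2) => x) j.succ v
      = cons x (Function.update (fun _ : Fin (k + 1) => x) j v) := by
  funext i
  cases i using cases <;> simp [Function.update_apply, (succ_ne_zero j).symm]

theorem const_succ_eq_cons (k : ℕ) (x : α) :
    (fun _ : Fin (k + 1) => x) = cons (α := fun _ => α) x (fun _ : Fin k => x) := by
  funext i
  cases i using cases <;> simp

theorem update_const_zero (k : ℕ) (x v : α) :
    Function.update (fun _ : Fin (k + 1) => x) 0 v = cons v (fun _ : Fin k => x) := by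
  rw [const_succ_eq_cons k x, update_cons_zero]

theorem cons_snoc_const (k : ℕ) (x v : α) :
    cons x (snoc (fun _ : Fin k => x) v) = snoc (α := fun _ => α) (fun _ : Fin (k + 1) => x) v := by
  rw [cons_snoc_eq_snoc_cons, ← const_succ_eq_cons k x]

end Fin

section IteratedFDeriv

variable {E F G : Type*} [NormedAddCommGroup E] [NormedSpace ℝ E] [NormedAddCommGroup F]
  [NormedSpace ℝ F] [NormedAddCommGroup G] [NormedSpace ℝ G] {f : E → F} {n k : ℕ} {y : E}

theorem iteratedFDeriv_succ_cons_eq_fderiv (hf : DifferentiableAt ℝ (iteratedFDeriv ℝ k f) y)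
    (a : E) (w : Fin k → E) :
    iteratedFDeriv ℝ (k + 1) f y (Fin.cons a w)
      = fderiv ℝ (fun z => iteratedFDeriv ℝ k f z w) y a := by
  rw [iteratedFDeriv_succ_apply_left, Fin.cons_zero, Fin.tail_cons,
    fderiv_continuousMultilinear_apply_const_apply hf]

theorem iteratedFDeriv_cons_cons_comm (hf : ContDiffAt ℝ n f y) (hk : k + 2 ≤ n) (a b : E)
    (w : Fin k → E) :
    iteratedFDeriv ℝ (k + 2) f y (Fin.cons a (Fin.cons b w))
      = iteratedFDeriv ℝ (k + 2) f y (Fin.cons b (Fin.cons a w)) := by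
  have hg : ContDiffAt ℝ 2 (iteratedFDeriv ℝ k f) y :=
    hf.iteratedFDeriv_right (by norm_cast; omega)
  have hd : DifferentiableAt ℝ (iteratedFDeriv ℝ (k + 1) f) y :=
    (hf.iteratedFDeriv_right (m := 1) (by norm_cast; omega)).differentiableAt one_ne_zero
  have hd' : DifferentiableAt ℝ (fderiv ℝ (iteratedFDeriv ℝ k f)) y :=
    (hg.fderiv_right (m := 1) le_rfl).differentiableAt one_ne_zero
  have hsecond : ∀ p q : E, iteratedFDeriv ℝ (k + 2) f y (Fin.cons p (Fin.cons q w))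
      = fderiv ℝ (fderiv ℝ (iteratedFDeriv ℝ k f)) y p q w := by
    intro p q
    rw [iteratedFDeriv_succ_cons_eq_fderiv hd]
    simp only [iteratedFDeriv_succ_apply_left, Fin.cons_zero, Fin.tail_cons]
    rw [fderiv_continuousMultilinear_apply_const_apply (hd'.clm_apply (differentiableAt_const q)),
      fderiv_clm_apply hd' (differentiableAt_const q)]
    simp
  rw [hsecond, hsecond, (hg.isSymmSndFDerivAt (by simp)).eq]

/-- For `j = 0` the first two slots are swapped by symmetry of the second derivative of `Dᵏ f`;
for `j > 0` the statement one order lower, valid near `y`, is differentiated. -/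
theorem iteratedFDeriv_update_const_eq_snoc (hf : ContDiffAt ℝ n f y) (hk : k + 1 ≤ n)
    (x v : E) (j : Fin (k + 1)) :
    iteratedFDeriv ℝ (k + 1) f y (Function.update (fun _ => x) j v)
      = iteratedFDeriv ℝ (k + 1) f y (Fin.snoc (fun _ : Fin k => x) v) := by
  induction k generalizing y with
  | zero => rw [Subsingleton.elim (α := Fin 1) j (Fin.last 0), Fin.update_const_last_eq_snoc]
  | succ k ih =>
    have hsucc : ∀ j : Fin (k + 1),
        iteratedFDeriv ℝ (k + 2) f y (Function.update (fun _ => x) j.succ v)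
          = iteratedFDeriv ℝ (k + 2) f y (Fin.snoc (fun _ : Fin (k + 1) => x) v) := by
      intro j
      have hd : DifferentiableAt ℝ (iteratedFDeriv ℝ (k + 1) f) y :=
        (hf.iteratedFDeriv_right (m := 1) (by norm_cast; omega)).differentiableAt one_ne_zero
      have hnear : (fun z => iteratedFDeriv ℝ (k + 1) f z (Function.update (fun _ => x) j v))
          =ᶠ[𝓝 y] fun z => iteratedFDeriv ℝ (k + 1) f z (Fin.snoc (fun _ => x) v) :=
        (hf.eventually (by simp)).mono fun z hz => ih hz (by omega) j
      rw [Fin.update_const_succ, ← Fin.cons_snoc_const, iteratedFDeriv_succ_cons_eq_fderiv hd,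
        iteratedFDeriv_succ_cons_eq_fderiv hd, hnear.fderiv_eq]
    refine Fin.cases ?_ hsucc j
    rw [Fin.update_const_zero, Fin.const_succ_eq_cons k x, iteratedFDeriv_cons_cons_comm hf hk,
      ← Fin.update_const_zero, ← Fin.update_const_succ]
    exact hsucc 0

theorem apply_curryRight_iteratedFDeriv_eq_zero (hf : ContDiffAt ℝ n f y) (hk : k + 1 ≤ n)
    (Ψ : (E →L[ℝ] F) →L[ℝ] G) (hΨ : ∀ᶠ z in 𝓝 y, Ψ (fderiv ℝ f z) = 0) (xs : Fin k → E) :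
    Ψ ((iteratedFDeriv ℝ (k + 1) f y).curryRight xs) = 0 := by
  have hcurry : (iteratedFDeriv ℝ (k + 1) f y).curryRight xs
      = iteratedFDeriv ℝ k (fderiv ℝ f) y xs := by
    ext v
    rw [ContinuousMultilinearMap.curryRight_apply, iteratedFDeriv_succ_apply_right, Fin.init_snoc,
      Fin.snoc_last]
  have hzero : iteratedFDeriv ℝ k (Ψ ∘ fderiv ℝ f) y = 0 := by
    have hΨ' : Ψ ∘ fderiv ℝ f =ᶠ[𝓝 y] 0 := hΨ
    rw [(hΨ'.iteratedFDeriv ℝ k).eq_of_nhds, iteratedFDeriv_zero]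
    rfl
  rw [hcurry]
  change Ψ.compContinuousMultilinearMap (iteratedFDeriv ℝ k (fderiv ℝ f) y) xs = 0
  rw [← Ψ.iteratedFDeriv_comp_left (hf.fderiv_right (by exact_mod_cast hk)) le_rfl, hzero]
  rfl

end IteratedFDeriv

section TaylorPolynomial

variable {E F : Type*} [NormedAddCommGroup E] [NormedSpace ℝ E] [NormedAddCommGroup F]
  [NormedSpace ℝ F] {f : E → F} {n k : ℕ} {a : E}

def taylorPolynomial (n : ℕ) (f : E → F) (a x : E) : F :=
  ∑ i ∈ range (n + 1), (i.factorial : ℝ)⁻¹ • iteratedFDeriv ℝ i f a (fun _ => x)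

theorem ContinuousMultilinearMap.hasFDerivAt_apply_diag
    (A : ContinuousMultilinearMap ℝ (fun _ : Fin k => E) F) (x : E) :
    HasFDerivAt (fun x => A fun _ => x) (∑ j, A.toContinuousLinearMap (fun _ => x) j) x := by
  refine ((A.hasFDerivAt _).comp x (hasFDerivAt_pi.2 fun _ => hasFDerivAt_id x)).congr_fderiv ?_
  ext v
  simp

theorem hasFDerivAt_taylorPolynomial (hf : ContDiffAt ℝ n f a) (x : E) :
    HasFDerivAt (taylorPolynomial n f a)
      (∑ i ∈ range n, (i.factorial : ℝ)⁻¹ • (iteratedFDeriv ℝ (i + 1) f a).curryRight fun _ => x)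
      x := by
  have hsum := HasFDerivAt.fun_sum (u := range (n + 1)) fun i _ =>
    ((iteratedFDeriv ℝ i f a).hasFDerivAt_apply_diag x).const_smul (i.factorial : ℝ)⁻¹
  refine hsum.congr_fderiv ?_
  rw [sum_range_succ']
  simp only [univ_eq_empty, sum_empty, smul_zero, add_zero]
  refine sum_congr rfl fun i hi => ?_
  ext v
  simp only [_root_.smul_apply, _root_.sum_apply,
    ContinuousMultilinearMap.curryRight_apply,
    ContinuousMultilinearMap.toContinuousLinearMap_apply,
    iteratedFDeriv_update_const_eq_snoc hf (mem_range.1 hi), sum_const, card_univ,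
    Fintype.card_fin]
  rw [← Nat.cast_smul_eq_nsmul ℝ, smul_smul, Nat.factorial_succ, Nat.cast_mul, mul_inv,
    mul_right_comm, inv_mul_cancel₀ (by positivity), one_mul]

end TaylorPolynomial

def partialComponent (d : Fin 7) (w : Fin 3 → E7) : (E7 →L[ℝ] Lam3) →L[ℝ] ℝ :=
  (ContinuousMultilinearMap.apply ℝ (fun _ : Fin 3 => E7) ℝ w).comp
    (altSubmodule.subtypeL.comp (ContinuousLinearMap.apply ℝ Lam3 (e7 d)))

/-- The component `(dβ)ᵢⱼₖₗ(x)` as a linear functional of `Dβ(x)`. -/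
def extDerivComponent (i j k l : Fin 7) : (E7 →L[ℝ] Lam3) →L[ℝ] ℝ :=
  partialComponent i ![e7 j, e7 k, e7 l] - partialComponent j ![e7 i, e7 k, e7 l]
    + partialComponent k ![e7 i, e7 j, e7 l] - partialComponent l ![e7 i, e7 j, e7 k]

theorem closed3FormOn_iff {β : E7 → Lam3} {U : Set E7} :
    Closed3FormOn β U ↔ DifferentiableOn ℝ β (interior U) ∧
      ∀ x ∈ interior U, ∀ i j k l, extDerivComponent i j k l (fderiv ℝ β x) = 0 :=
  Iff.rfl

theorem stmt6_general (n : ℕ) (U : Set E7) (hU : IsOpen U) (h0 : (0 : E7) ∈ U)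
    (β : E7 → Lam3) (hreg : ContDiffOn ℝ n β U) (hclosed : Closed3FormOn β U) :
    Closed3FormOn
      (fun x : E7 => ∑ i ∈ Finset.range (n + 1),
        ((i.factorial : ℝ))⁻¹ • iteratedFDeriv ℝ i β 0 (fun _ => x))
      Set.univ := by
  change Closed3FormOn (taylorPolynomial n β 0) univ
  have hf : ContDiffAt ℝ n β 0 := hreg.contDiffAt (hU.mem_nhds h0)
  rw [closed3FormOn_iff] at hclosed ⊢
  refine ⟨fun x _ => (hasFDerivAt_taylorPolynomial hf x).differentiableAt.differentiableWithinAt,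
    fun x _ i j k l => ?_⟩
  have hβ : ∀ᶠ y in 𝓝 0, extDerivComponent i j k l (fderiv ℝ β y) = 0 :=
    eventually_of_mem (hU.mem_nhds h0) fun y hy =>
      hclosed.2 y (hU.interior_eq.symm ▸ hy) i j k l
  rw [(hasFDerivAt_taylorPolynomial hf x).fderiv, map_sum]
  refine sum_eq_zero fun m hm => ?_
  rw [map_smul, apply_curryRight_iteratedFDeriv_eq_zero hf (mem_range.1 hm) _ hβ, smul_zero]

/-- If `β` is an `n` times continuously differentiable closed 3-form
on an open set `U ∋ 0`, then its `n`-th Taylor polynomial at the origin,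
`P_n β(x) = ∑_{i=0}^n (1/i!) (Dⁱβ(0))(x,…,x)`, is a closed 3-form on all of ℝ⁷. -/
theorem stmt6 (n : ℕ) (hn : 1 ≤ n) (U : Set E7) (hU : IsOpen U) (h0 : (0 : E7) ∈ U)
    (β : E7 → Lam3) (hreg : ContDiffOn ℝ n β U) (hclosed : Closed3FormOn β U) :
    Closed3FormOn
      (fun x : E7 => ∑ i ∈ Finset.range (n + 1),
        ((i.factorial : ℝ))⁻¹ • iteratedFDeriv ℝ i β 0 (fun _ => x))
      Set.univ :=
  stmt6_general n U hU h0 β hreg hclosed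
end
end

section
/- Let K be a second-order linear differential operator on 3-forms on ℝ⁷ with smooth coefficients, i.e. (Kβ)(x) = ∑_{m,n=1}^{7} A_{mn}(x)(∂_m∂_n β(x)) + ∑_{m=1}^{7} B_m(x)(∂_m β(x)) + C(x)(β(x)) with A_{mn}, B_m, C : ℝ⁷ → End(Λ³) smooth, and suppose the highest-order coefficients vanish at the origin: A_{mn}(0) = 0 for all m,n. Then there exists a constant c > 0 such that for every s ∈ (0,1] and every 3-form ψ that is twice continuously differentiable within the closed unit ball B̄(0,1) ⊆ ℝ⁷, the rescaled 3-form ψ_s(x) = ψ(s⁻¹x) defined on the closed ball B̄(0,s) satisfies sup_{x ∈ B̄(0,s)} ‖(Kψ_s)(x)‖ ≤ c · s⁻¹ · ∑_{i=0}^{2} sup_{y ∈ B̄(0,1)} ‖D^i ψ(y)‖, where D^i ψ is the i-th iterated Fréchet derivative of ψ within B̄(0,1). -/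
open scoped BigOperators
open Metric Set

set_option synthInstance.maxHeartbeats 1000000
set_option maxHeartbeats 1000000

noncomputable section

section helpers

variable {F : Type*} [NormedAddCommGroup F] [NormedSpace ℝ F]

lemma udOn {s : ℝ} (hs : 0 < s) : UniqueDiffOn ℝ (closedBall (0:E7) s) :=
  uniqueDiffOn_convex (convex_closedBall _ _) (by
    rw [interior_closedBall _ hs.ne']
    exact ⟨0, mem_ball_self hs⟩)

lemma mapsToCB {s : ℝ} (hs0 : 0 < s) (hs1 : s ≤ 1) :
    Set.MapsTo (fun y : E7 => s⁻¹ • y) (closedBall 0 s) (closedBall 0 1) := by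
  intro y hy
  simp only [mem_closedBall, dist_zero_right] at *
  rw [norm_smul, Real.norm_eq_abs, abs_of_pos (by positivity : (0:ℝ) < s⁻¹)]
  calc s⁻¹ * ‖y‖ ≤ s⁻¹ * s := by gcongr
  _ = 1 := inv_mul_cancel₀ hs0.ne'

lemma hasFDW_scale {s : ℝ} (hs0 : 0 < s) (hs1 : s ≤ 1) {f : E7 → F}
    {f' : E7 →L[ℝ] F} {x : E7} (_hx : x ∈ closedBall (0:E7) s)
    (hf : HasFDerivWithinAt f f' (closedBall 0 1) (s⁻¹ • x)) :
    HasFDerivWithinAt (fun y => f (s⁻¹ • y)) (s⁻¹ • f') (closedBall (0:E7) s) x := by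
  have hh : HasFDerivWithinAt (fun y : E7 => s⁻¹ • y)
      (s⁻¹ • ContinuousLinearMap.id ℝ E7) (closedBall 0 s) x :=
    (hasFDerivWithinAt_id x _).const_smul s⁻¹
  have h2 := hf.comp x hh (mapsToCB hs0 hs1)
  refine h2.congr_fderiv ?_
  ext v
  simp

end helpers

/-- rescaling estimate. If the highest-order coefficients of the
second-order operator `K` vanish at the origin, then there is `c > 0` so that for
every `s ∈ (0,1]` and every 3-form `ψ` that is `C²` within the closed unit ball,
the rescaled form `ψ_s(x) = ψ(s⁻¹x)` satisfies
`‖(Kψ_s)(x)‖ ≤ c s⁻¹ ∑_{i=0}^{2} sup_{B̄(0,1)} ‖Dⁱψ‖` on `B̄(0,s)`. -/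
theorem stmt8 (A : Fin 7 → Fin 7 → E7 → (Lam3 →L[ℝ] Lam3))
    (B : Fin 7 → E7 → (Lam3 →L[ℝ] Lam3)) (C : E7 → (Lam3 →L[ℝ] Lam3))
    (hA : ∀ m n : Fin 7, ContDiff ℝ (⊤ : ℕ∞) (A m n))
    (hB : ∀ m : Fin 7, ContDiff ℝ (⊤ : ℕ∞) (B m))
    (hC : ContDiff ℝ (⊤ : ℕ∞) C)
    (hA0 : ∀ m n : Fin 7, A m n 0 = 0) :
    ∃ c : ℝ, 0 < c ∧
      ∀ s ∈ Set.Ioc (0 : ℝ) 1, ∀ ψ : E7 → Lam3,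
        ContDiffOn ℝ 2 ψ (closedBall 0 1) →
        ∀ x ∈ closedBall (0 : E7) s,
          ‖Kop A B C (closedBall 0 s) (fun y : E7 => ψ (s⁻¹ • y)) x‖ ≤
            c * s⁻¹ * ∑ i ∈ Finset.range 3,
              ⨆ y : closedBall (0 : E7) 1,
                ‖iteratedFDerivWithin ℝ i ψ (closedBall 0 1) (y : E7)‖ := by
  classical
  have hcb : IsCompact (closedBall (0:E7) 1) := isCompact_closedBall _ _
  -- Lipschitz-type bounds for A near 0, and sup bounds for B, C
  have hA' : ∀ m n : Fin 7, ∃ K : ℝ, 0 ≤ K ∧ ∀ x ∈ closedBall (0:E7) 1,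
      ‖A m n x‖ ≤ K * ‖x‖ := by
    intro m n
    obtain ⟨K, hK⟩ := hcb.exists_bound_of_continuousOn
      ((hA m n).continuous_fderiv (by simp)).continuousOn
    refine ⟨max K 0, le_max_right _ _, fun x hx => ?_⟩
    have := Convex.norm_image_sub_le_of_norm_fderiv_le (C := max K 0)
      (fun y _ => ((hA m n).differentiable (by simp)).differentiableAt)
      (fun y hy => le_trans (hK y hy) (le_max_left K 0)) (convex_closedBall _ _)
      (mem_closedBall_self zero_le_one) hx
    simpa [hA0 m n] using this
  have hB' : ∀ m : Fin 7, ∃ K : ℝ, 0 ≤ K ∧ ∀ x ∈ closedBall (0:E7) 1, ‖B m x‖ ≤ K := by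
    intro m
    obtain ⟨K, hK⟩ := hcb.exists_bound_of_continuousOn (hB m).continuous.continuousOn
    exact ⟨max K 0, le_max_right _ _, fun x hx => le_trans (hK x hx) (le_max_left _ _)⟩
  obtain ⟨KC, hKC0, hKC⟩ : ∃ K : ℝ, 0 ≤ K ∧ ∀ x ∈ closedBall (0:E7) 1, ‖C x‖ ≤ K := by
    obtain ⟨K, hK⟩ := hcb.exists_bound_of_continuousOn hC.continuous.continuousOn
    exact ⟨max K 0, le_max_right _ _, fun x hx => le_trans (hK x hx) (le_max_left _ _)⟩
  choose KA hKA0 hKA using hA'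
  choose KB hKB0 hKB using hB'
  refine ⟨(∑ m : Fin 7, ∑ n : Fin 7, KA m n) + (∑ m : Fin 7, KB m) + KC + 1, ?_, ?_⟩
  · have h1 : 0 ≤ ∑ m : Fin 7, ∑ n : Fin 7, KA m n :=
      Finset.sum_nonneg fun m _ => Finset.sum_nonneg fun n _ => hKA0 m n
    have h2 : 0 ≤ ∑ m : Fin 7, KB m := Finset.sum_nonneg fun m _ => hKB0 m
    linarith
  intro s hs ψ hψ x hx
  obtain ⟨hs0, hs1⟩ := hs
  have hsinv : (1:ℝ) ≤ s⁻¹ := (one_le_inv₀ hs0).mpr hs1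
  have hsinv0 : (0:ℝ) ≤ s⁻¹ := by positivity
  have udM : UniqueDiffOn ℝ (closedBall (0:E7) 1) := udOn one_pos
  have udN : UniqueDiffOn ℝ (closedBall (0:E7) s) := udOn hs0
  set z : E7 := s⁻¹ • x with hzdef
  have hz : z ∈ closedBall (0:E7) 1 := mapsToCB hs0 hs1 hx
  have hψd : DifferentiableOn ℝ ψ (closedBall 0 1) := hψ.differentiableOn (by norm_num)
  have hD1 : ContDiffOn ℝ 1 (fderivWithin ℝ ψ (closedBall 0 1)) (closedBall 0 1) :=
    hψ.fderivWithin udM (by norm_num)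
  have hD1d : DifferentiableOn ℝ (fderivWithin ℝ ψ (closedBall 0 1)) (closedBall 0 1) :=
    hD1.differentiableOn one_ne_zero
  -- sup bounds
  have hbdd : ∀ i : ℕ, i ≤ 2 → BddAbove (Set.range fun y : closedBall (0:E7) 1 =>
      ‖iteratedFDerivWithin ℝ i ψ (closedBall 0 1) (y : E7)‖) := by
    intro i hi
    have hci := hψ.continuousOn_iteratedFDerivWithin (m := i) (by exact_mod_cast hi) udM
    obtain ⟨Ci, hCi⟩ := hcb.exists_bound_of_continuousOn hci
    exact ⟨Ci, by rintro _ ⟨y, rfl⟩; exact hCi y y.2⟩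
  have hSle : ∀ i : ℕ, i ≤ 2 → ∀ y ∈ closedBall (0:E7) 1,
      ‖iteratedFDerivWithin ℝ i ψ (closedBall 0 1) y‖ ≤
        ⨆ w : closedBall (0:E7) 1, ‖iteratedFDerivWithin ℝ i ψ (closedBall 0 1) (w : E7)‖ :=
    fun i hi y hy => le_ciSup (hbdd i hi) ⟨y, hy⟩
  have hS0 : ∀ i : ℕ,
      0 ≤ ⨆ w : closedBall (0:E7) 1, ‖iteratedFDerivWithin ℝ i ψ (closedBall 0 1) (w : E7)‖ :=
    fun i => Real.iSup_nonneg fun w => norm_nonneg _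
  set S : ℕ → ℝ := fun i =>
    ⨆ w : closedBall (0:E7) 1, ‖iteratedFDerivWithin ℝ i ψ (closedBall 0 1) (w : E7)‖ with hSdef
  have hsum : ∑ i ∈ Finset.range 3, S i = S 0 + S 1 + S 2 := by
    simp [Finset.sum_range_succ]
  have hTnn : 0 ≤ S 0 + S 1 + S 2 := by
    have := hS0 0; have := hS0 1; have := hS0 2; linarith
  have hS0T : S 0 ≤ S 0 + S 1 + S 2 := by have := hS0 1; have := hS0 2; linarith
  have hS1T : S 1 ≤ S 0 + S 1 + S 2 := by have := hS0 0; have := hS0 2; linarith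
  have hS2T : S 2 ≤ S 0 + S 1 + S 2 := by have := hS0 0; have := hS0 1; linarith
  have he7 : ∀ i : Fin 7, ‖e7 i‖ = 1 := by
    intro i; simp [e7, EuclideanSpace.norm_single]
  -- first derivative of the rescaled map
  have hg1 : ∀ y ∈ closedBall (0:E7) s,
      HasFDerivWithinAt (fun w : E7 => ψ (s⁻¹ • w))
        (s⁻¹ • fderivWithin ℝ ψ (closedBall 0 1) (s⁻¹ • y)) (closedBall 0 s) y :=
    fun y hy => hasFDW_scale hs0 hs1 hy
      ((hψd _ (mapsToCB hs0 hs1 hy)).hasFDerivWithinAt)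
  have heq1 : ∀ y ∈ closedBall (0:E7) s,
      fderivWithin ℝ (fun w : E7 => ψ (s⁻¹ • w)) (closedBall 0 s) y
        = s⁻¹ • fderivWithin ℝ ψ (closedBall 0 1) (s⁻¹ • y) :=
    fun y hy => (hg1 y hy).fderivWithin (udN y hy)
  -- bound for the first-order terms
  have hfirst : ∀ m : Fin 7,
      ‖fderivWithin ℝ (fun w : E7 => ψ (s⁻¹ • w)) (closedBall 0 s) x (e7 m)‖
        ≤ s⁻¹ * S 1 := by
    intro m
    rw [heq1 x hx]
    have h1 : fderivWithin ℝ ψ (closedBall 0 1) z (e7 m)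
        = iteratedFDerivWithin ℝ 1 ψ (closedBall 0 1) z ![e7 m] := by
      rw [iteratedFDerivWithin_one_apply (udM z hz)]
      simp
    have h2 : ‖iteratedFDerivWithin ℝ 1 ψ (closedBall 0 1) z ![e7 m]‖ ≤ S 1 := by
      refine le_trans (ContinuousMultilinearMap.le_opNorm _ _) ?_
      have : ∏ i : Fin 1, ‖(![e7 m] : Fin 1 → E7) i‖ = 1 := by
        simp [he7]
      rw [this, mul_one]
      exact hSle 1 (by norm_num) z hz
    simp only [ContinuousLinearMap.smul_apply, norm_smul, Real.norm_eq_abs,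
      abs_of_nonneg hsinv0]
    rw [← hzdef, h1]
    exact mul_le_mul_of_nonneg_left h2 hsinv0
  -- second derivatives
  have hsecond : ∀ m n : Fin 7,
      ‖fderivWithin ℝ (fun y => fderivWithin ℝ (fun w : E7 => ψ (s⁻¹ • w))
          (closedBall 0 s) y (e7 n)) (closedBall 0 s) x (e7 m)‖
        ≤ s⁻¹ * (s⁻¹ * S 2) := by
    intro m n
    set F2 : E7 → Lam3 := fun w => fderivWithin ℝ ψ (closedBall 0 1) w (e7 n) with hF2def
    have hF2 : ∀ w ∈ closedBall (0:E7) 1, HasFDerivWithinAt F2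
        ((ContinuousLinearMap.apply ℝ Lam3 (e7 n)).comp
          (fderivWithin ℝ (fderivWithin ℝ ψ (closedBall 0 1)) (closedBall 0 1) w))
        (closedBall 0 1) w := fun w hw =>
      (ContinuousLinearMap.apply ℝ Lam3 (e7 n)).hasFDerivAt.comp_hasFDerivWithinAt w
        ((hD1d w hw).hasFDerivWithinAt)
    have hEq : Set.EqOn
        (fun y => fderivWithin ℝ (fun w : E7 => ψ (s⁻¹ • w)) (closedBall 0 s) y (e7 n))
        (fun y => s⁻¹ • F2 (s⁻¹ • y)) (closedBall 0 s) := by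
      intro y hy
      simp only [heq1 y hy, ContinuousLinearMap.smul_apply, hF2def]
    have hder : HasFDerivWithinAt (fun y => s⁻¹ • F2 (s⁻¹ • y))
        (s⁻¹ • (s⁻¹ • ((ContinuousLinearMap.apply ℝ Lam3 (e7 n)).comp
          (fderivWithin ℝ (fderivWithin ℝ ψ (closedBall 0 1)) (closedBall 0 1) z))))
        (closedBall 0 s) x :=
      (hasFDW_scale hs0 hs1 hx (hF2 z hz)).const_smul s⁻¹
    have hcongr : fderivWithin ℝ
        (fun y => fderivWithin ℝ (fun w : E7 => ψ (s⁻¹ • w)) (closedBall 0 s) y (e7 n))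
        (closedBall 0 s) x
        = fderivWithin ℝ (fun y => s⁻¹ • F2 (s⁻¹ • y)) (closedBall 0 s) x :=
      fderivWithin_congr hEq (hEq hx)
    rw [hcongr, hder.fderivWithin (udN x hx)]
    have hval : fderivWithin ℝ (fderivWithin ℝ ψ (closedBall 0 1)) (closedBall 0 1) z
          (e7 m) (e7 n)
        = iteratedFDerivWithin ℝ 2 ψ (closedBall 0 1) z ![e7 m, e7 n] := by
      rw [iteratedFDerivWithin_two_apply ψ udM hz]
      simp
    have h2 : ‖iteratedFDerivWithin ℝ 2 ψ (closedBall 0 1) z ![e7 m, e7 n]‖ ≤ S 2 := by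
      refine le_trans (ContinuousMultilinearMap.le_opNorm _ _) ?_
      have : ∏ i : Fin 2, ‖(![e7 m, e7 n] : Fin 2 → E7) i‖ = 1 := by
        simp [Fin.prod_univ_two, he7]
      rw [this, mul_one]
      exact hSle 2 le_rfl z hz
    simp only [ContinuousLinearMap.smul_apply, ContinuousLinearMap.coe_comp',
      Function.comp_apply, ContinuousLinearMap.apply_apply, norm_smul, Real.norm_eq_abs,
      abs_of_nonneg hsinv0]
    rw [hval]
    exact mul_le_mul_of_nonneg_left (mul_le_mul_of_nonneg_left h2 hsinv0) hsinv0
  -- zeroth order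
  have hzero : ‖ψ z‖ ≤ S 0 := by
    rw [← norm_iteratedFDerivWithin_zero (𝕜 := ℝ) (f := ψ) (s := closedBall 0 1) (x := z)]
    exact hSle 0 (by norm_num) z hz
  have hxnorm : ‖x‖ ≤ s := by simpa [mem_closedBall, dist_zero_right] using hx
  -- assemble
  rw [hsum] at *
  set T := S 0 + S 1 + S 2 with hTdef
  have hxcb1 : x ∈ closedBall (0:E7) 1 :=
    mem_closedBall_zero_iff.mpr (le_trans hxnorm hs1)
  have hAbound : ∀ m n : Fin 7,
      ‖A m n x (fderivWithin ℝ (fun y => fderivWithin ℝ (fun w : E7 => ψ (s⁻¹ • w))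
          (closedBall 0 s) y (e7 n)) (closedBall 0 s) x (e7 m))‖
        ≤ KA m n * (s⁻¹ * T) := by
    intro m n
    refine le_trans (ContinuousLinearMap.le_opNorm _ _) ?_
    have h1 : ‖A m n x‖ ≤ KA m n * s := le_trans (hKA m n x hxcb1)
      (mul_le_mul_of_nonneg_left hxnorm (hKA0 m n))
    calc ‖A m n x‖ * ‖_‖ ≤ (KA m n * s) * (s⁻¹ * (s⁻¹ * S 2)) := by
          exact mul_le_mul h1 (hsecond m n) (norm_nonneg _) (mul_nonneg (hKA0 m n) hs0.le)
    _ = (KA m n * (s⁻¹ * S 2)) * (s * s⁻¹) := by ring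
    _ = KA m n * (s⁻¹ * S 2) := by rw [mul_inv_cancel₀ hs0.ne', mul_one]
    _ ≤ KA m n * (s⁻¹ * T) := by
          refine mul_le_mul_of_nonneg_left ?_ (hKA0 m n)
          exact mul_le_mul_of_nonneg_left hS2T hsinv0
  have hBbound : ∀ m : Fin 7,
      ‖B m x (fderivWithin ℝ (fun w : E7 => ψ (s⁻¹ • w)) (closedBall 0 s) x (e7 m))‖
        ≤ KB m * (s⁻¹ * T) := by
    intro m
    refine le_trans (ContinuousLinearMap.le_opNorm _ _) ?_
    calc ‖B m x‖ * ‖_‖ ≤ KB m * (s⁻¹ * S 1) :=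
          mul_le_mul (hKB m x hxcb1) (hfirst m) (norm_nonneg _) (hKB0 m)
    _ ≤ KB m * (s⁻¹ * T) := by
          exact mul_le_mul_of_nonneg_left (mul_le_mul_of_nonneg_left hS1T hsinv0) (hKB0 m)
  have hCbound : ‖C x (ψ (s⁻¹ • x))‖ ≤ KC * (s⁻¹ * T) := by
    refine le_trans (ContinuousLinearMap.le_opNorm _ _) ?_
    calc ‖C x‖ * ‖ψ (s⁻¹ • x)‖ ≤ KC * S 0 :=
          mul_le_mul (hKC x hxcb1) hzero (norm_nonneg _) hKC0
    _ ≤ KC * (s⁻¹ * T) := by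
          refine mul_le_mul_of_nonneg_left ?_ hKC0
          calc S 0 ≤ 1 * T := by rw [one_mul]; exact hS0T
          _ ≤ s⁻¹ * T := mul_le_mul_of_nonneg_right hsinv hTnn
  calc ‖Kop A B C (closedBall 0 s) (fun y : E7 => ψ (s⁻¹ • y)) x‖
      ≤ (∑ m : Fin 7, ∑ n : Fin 7,
          ‖A m n x (fderivWithin ℝ (fun y => fderivWithin ℝ (fun w : E7 => ψ (s⁻¹ • w))
            (closedBall 0 s) y (e7 n)) (closedBall 0 s) x (e7 m))‖)
        + (∑ m : Fin 7,
            ‖B m x (fderivWithin ℝ (fun w : E7 => ψ (s⁻¹ • w)) (closedBall 0 s) x (e7 m))‖)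
        + ‖C x (ψ (s⁻¹ • x))‖ := by
        unfold Kop
        refine le_trans (norm_add_le _ _)
          (add_le_add (le_trans (norm_add_le _ _) (add_le_add ?_ ?_)) le_rfl)
        · exact le_trans (norm_sum_le _ _) (Finset.sum_le_sum fun m _ => norm_sum_le _ _)
        · exact norm_sum_le _ _
    _ ≤ (∑ m : Fin 7, ∑ n : Fin 7, KA m n * (s⁻¹ * T))
        + (∑ m : Fin 7, KB m * (s⁻¹ * T)) + KC * (s⁻¹ * T) := by
        refine add_le_add (add_le_add ?_ ?_) hCbound
        · exact Finset.sum_le_sum fun m _ => Finset.sum_le_sum fun n _ => hAbound m n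
        · exact Finset.sum_le_sum fun m _ => hBbound m
    _ = ((∑ m : Fin 7, ∑ n : Fin 7, KA m n) + (∑ m : Fin 7, KB m) + KC) * (s⁻¹ * T) := by
        simp only [← Finset.sum_mul]
        ring
    _ ≤ ((∑ m : Fin 7, ∑ n : Fin 7, KA m n) + (∑ m : Fin 7, KB m) + KC + 1) * s⁻¹ * T := by
        rw [mul_assoc]
        refine mul_le_mul_of_nonneg_right (by linarith) ?_
        positivity
end
end
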